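/- arXiv:1508.05253 — 3 statements merged into one kernel-verified Lean document; each statement's English description precedes it below -/
import Mathlib

section
/- Let 2/3 < α ≤ 1 and consider an instance of the FSSP with two agents and a shared item set in which every item weight is at most α. Then every maximin fair solution x_MM satisfies z* − z(x_MM) ≤ (2α − 1) · z*. -/
/-! Definitions for the Fair Subset Sum Problem (FSSP) with two agents `A` and `B`
sharing a common item set with weights `w : Fin n → ℝ`.
A solution is a pair of disjoint index subsets; feasibility means the total
selected weight does not exceed the capacity `1`. -/

/-- Total weight of the items of `S`. -/
noncomputable def sumw {n : ℕ} (w : Fin n → ℝ) (S : Finset (Fin n)) : ℝ := ∑ i ∈ S, w i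

/-- A feasible solution of FSSP with a shared item set: disjoint subsets whose
total weight is at most `1`. -/
def Feas {n : ℕ} (w : Fin n → ℝ) (x : Finset (Fin n) × Finset (Fin n)) : Prop :=
  Disjoint x.1 x.2 ∧ sumw w x.1 + sumw w x.2 ≤ 1

/-- Social utility `z(x) = a(x) + b(x)`. -/
noncomputable def zv {n : ℕ} (w : Fin n → ℝ) (x : Finset (Fin n) × Finset (Fin n)) : ℝ :=
  sumw w x.1 + sumw w x.2

/-- Pareto efficient feasible solution. -/
def Pareto {n : ℕ} (w : Fin n → ℝ) (x : Finset (Fin n) × Finset (Fin n)) : Prop :=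
  Feas w x ∧ ¬ ∃ y, Feas w y ∧ sumw w x.1 ≤ sumw w y.1 ∧ sumw w x.2 ≤ sumw w y.2 ∧
    (sumw w x.1 < sumw w y.1 ∨ sumw w x.2 < sumw w y.2)

/-- System optimum: a feasible solution maximizing the social utility. -/
def SysOpt {n : ℕ} (w : Fin n → ℝ) (x : Finset (Fin n) × Finset (Fin n)) : Prop :=
  Feas w x ∧ ∀ y, Feas w y → zv w y ≤ zv w x

/-- Maximin fair solution: Pareto efficient and maximizing `min{a(x), b(x)}`. -/
def Maximin {n : ℕ} (w : Fin n → ℝ) (x : Finset (Fin n) × Finset (Fin n)) : Prop :=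
  Pareto w x ∧ ∀ y, Feas w y →
    min (sumw w y.1) (sumw w y.2) ≤ min (sumw w x.1) (sumw w x.2)

/-- A valid FSSP instance with a shared item set in which every item weight is
nonnegative and at most `α`, and the total weight exceeds the capacity `1`. -/
def ValidInst {n : ℕ} (w : Fin n → ℝ) (α : ℝ) : Prop :=
  (∀ i, 0 ≤ w i) ∧ (∀ i, w i ≤ α) ∧ 1 < ∑ i, w i


private lemma sumw_nonneg {n : ℕ} {w : Fin n → ℝ} (hw0 : ∀ i, 0 ≤ w i)
    (S : Finset (Fin n)) : 0 ≤ sumw w S :=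
  Finset.sum_nonneg (fun i _ => hw0 i)

private lemma Feas_swap {n : ℕ} {w : Fin n → ℝ} {x : Finset (Fin n) × Finset (Fin n)}
    (h : Feas w x) : Feas w (x.2, x.1) :=
  ⟨h.1.symm, by have := h.2; simpa [add_comm] using this⟩

private lemma Maximin_swap {n : ℕ} {w : Fin n → ℝ} {x : Finset (Fin n) × Finset (Fin n)}
    (h : Maximin w x) : Maximin w (x.2, x.1) := by
  obtain ⟨⟨hF, hP⟩, hM⟩ := h
  refine ⟨⟨Feas_swap hF, ?_⟩, ?_⟩
  · rintro ⟨y, hyF, h1, h2, hs⟩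
    exact hP ⟨(y.2, y.1), Feas_swap hyF, h2, h1, hs.symm⟩
  · intro y hy
    have := hM (y.2, y.1) (Feas_swap hy)
    simpa [min_comm] using this

private lemma key_lemma (α : ℝ) (hα0 : 2/3 < α) (hα1 : α ≤ 1)
    {n : ℕ} (w : Fin n → ℝ) (hw0 : ∀ i, 0 ≤ w i) (hwα : ∀ i, w i ≤ α)
    (xopt : Finset (Fin n) × Finset (Fin n)) (hoptF : Feas w xopt)
    (xMM : Finset (Fin n) × Finset (Fin n)) (hMM : Maximin w xMM)
    (hab : sumw w xMM.1 ≤ sumw w xMM.2) :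
    (2 - 2*α) * zv w xopt ≤ zv w xMM := by
  obtain ⟨⟨⟨hxd, hxf⟩, hnem⟩, hmax⟩ := hMM
  obtain ⟨hod, hof⟩ := hoptF
  by_contra hcon
  push_neg at hcon
  set a := sumw w xMM.1 with ha_def
  set b := sumw w xMM.2 with hb_def
  have ha0 : 0 ≤ a := sumw_nonneg hw0 _
  have hb0 : 0 ≤ b := sumw_nonneg hw0 _
  have ho10 : 0 ≤ sumw w xopt.1 := sumw_nonneg hw0 _
  have ho20 : 0 ≤ sumw w xopt.2 := sumw_nonneg hw0 _
  have hzv : zv w xMM = a + b := rfl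
  have hzs0 : 0 ≤ zv w xopt := by rw [zv]; linarith
  have hzs1 : zv w xopt ≤ 1 := hof
  -- z* > 0
  have hzs : 0 < zv w xopt := by nlinarith [hcon]
  -- z < 2 - 2α
  have hz2 : a + b < 2 - 2*α := by nlinarith [hcon]
  -- a < 1 - α
  have ha1 : a < 1 - α := by nlinarith [hcon]
  -- opt sum as a union sum
  have hzsu : zv w xopt = sumw w (xopt.1 ∪ xopt.2) := by
    rw [zv, sumw, sumw, sumw, ← Finset.sum_union hod]
  -- z* ≤ z leads to contradiction
  have hfinal : ¬ (zv w xopt ≤ a + b) := by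
    intro hle
    nlinarith [hcon, hzs]
  by_cases hcase : ∃ u ∈ xopt.1 ∪ xopt.2, u ∉ xMM.1 ∪ xMM.2 ∧ 0 < w u
  · obtain ⟨u, huS, huM, huw⟩ := hcase
    have hu1 : u ∉ xMM.1 := fun h => huM (Finset.mem_union_left _ h)
    have hu2 : u ∉ xMM.2 := fun h => huM (Finset.mem_union_right _ h)
    have huα : w u ≤ α := hwα u
    -- step 6: 1 < z + w u via Pareto
    have h6 : 1 < a + b + w u := by
      by_contra h6
      push_neg at h6
      refine hnem ⟨(insert u xMM.1, xMM.2), ⟨?_, ?_⟩, ?_, le_refl b, Or.inl ?_⟩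
      · exact Finset.disjoint_insert_left.mpr ⟨hu2, hxd⟩
      · show sumw w (insert u xMM.1) + b ≤ 1
        rw [sumw, Finset.sum_insert hu1]
        have : (∑ i ∈ xMM.1, w i) = a := rfl
        linarith
      · show a ≤ sumw w (insert u xMM.1)
        rw [sumw, Finset.sum_insert hu1]
        have : (∑ i ∈ xMM.1, w i) = a := rfl
        linarith
      · show a < sumw w (insert u xMM.1)
        rw [sumw, Finset.sum_insert hu1]
        have : (∑ i ∈ xMM.1, w i) = a := rfl
        linarith
    have hua : a < w u := by linarith
    -- step 7: w u ≤ b via Pareto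
    have h7 : w u ≤ b := by
      by_contra h7
      push_neg at h7
      refine hnem ⟨(xMM.1, {u}), ⟨?_, ?_⟩, le_refl a, ?_, Or.inr ?_⟩
      · exact Finset.disjoint_singleton_right.mpr hu1
      · show a + sumw w {u} ≤ 1
        rw [sumw, Finset.sum_singleton]
        linarith
      · show b ≤ sumw w {u}
        rw [sumw, Finset.sum_singleton]
        linarith
      · show b < sumw w {u}
        rw [sumw, Finset.sum_singleton]
        linarith
    -- step 11: maximin with ({u}, opt \ {u})
    have hQsum : sumw w ((xopt.1 ∪ xopt.2).erase u) + w u = zv w xopt := by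
      rw [hzsu, sumw, sumw]
      exact Finset.sum_erase_add _ _ huS
    have hyF : Feas w ({u}, (xopt.1 ∪ xopt.2).erase u) := by
      constructor
      · exact Finset.disjoint_singleton_left.mpr (Finset.notMem_erase u _)
      · show sumw w {u} + sumw w ((xopt.1 ∪ xopt.2).erase u) ≤ 1
        rw [sumw, Finset.sum_singleton]
        linarith
    have hmin := hmax _ hyF
    have hQa : sumw w ((xopt.1 ∪ xopt.2).erase u) ≤ a := by
      by_contra hQ
      push_neg at hQ
      have h1 : min (sumw w {u}) (sumw w ((xopt.1 ∪ xopt.2).erase u)) ≤ a :=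
        le_trans hmin (min_le_left _ _)
      have h2 : a < min (sumw w {u}) (sumw w ((xopt.1 ∪ xopt.2).erase u)) := by
        apply lt_min _ hQ
        rw [sumw, Finset.sum_singleton]; exact hua
      linarith
    exact hfinal (by linarith)
  · -- no positive opt item outside xMM: z* ≤ z
    push_neg at hcase
    apply hfinal
    rw [hzsu]
    have hsplit : sumw w (xopt.1 ∪ xopt.2) =
        (∑ i ∈ (xopt.1 ∪ xopt.2) ∩ (xMM.1 ∪ xMM.2), w i) +
        (∑ i ∈ (xopt.1 ∪ xopt.2) \ (xMM.1 ∪ xMM.2), w i) := by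
      rw [sumw, Finset.sum_inter_add_sum_sdiff]
    have h1 : (∑ i ∈ (xopt.1 ∪ xopt.2) ∩ (xMM.1 ∪ xMM.2), w i) ≤ a + b := by
      have hsub : (xopt.1 ∪ xopt.2) ∩ (xMM.1 ∪ xMM.2) ⊆ xMM.1 ∪ xMM.2 :=
        Finset.inter_subset_right
      calc (∑ i ∈ (xopt.1 ∪ xopt.2) ∩ (xMM.1 ∪ xMM.2), w i)
          ≤ ∑ i ∈ xMM.1 ∪ xMM.2, w i :=
            Finset.sum_le_sum_of_subset_of_nonneg hsub (fun i _ _ => hw0 i)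
        _ = a + b := by rw [ha_def, hb_def, sumw, sumw, ← Finset.sum_union hxd]
    have h2 : (∑ i ∈ (xopt.1 ∪ xopt.2) \ (xMM.1 ∪ xMM.2), w i) ≤ 0 := by
      apply Finset.sum_nonpos
      intro i hi
      rw [Finset.mem_sdiff] at hi
      have := hcase i hi.1 hi.2
      linarith
    linarith [hsplit, h1, h2]

/-- For `2/3 < α ≤ 1`, every maximin fair solution of an FSSP instance with a
shared item set and item weights at most `α` satisfies
`z* - z(x_MM) ≤ (2α - 1) · z*`. -/
theorem pof_shared_maximin_large_alpha (α : ℝ) (hα0 : 2/3 < α) (hα1 : α ≤ 1)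
    {n : ℕ} (w : Fin n → ℝ) (hinst : ValidInst w α)
    (xopt : Finset (Fin n) × Finset (Fin n)) (hopt : SysOpt w xopt)
    (xMM : Finset (Fin n) × Finset (Fin n)) (hMM : Maximin w xMM) :
    zv w xopt - zv w xMM ≤ (2 * α - 1) * zv w xopt := by
  obtain ⟨hw0, hwα, htot⟩ := hinst
  have hkey : (2 - 2*α) * zv w xopt ≤ zv w xMM := by
    rcases le_total (sumw w xMM.1) (sumw w xMM.2) with hab | hab
    · exact key_lemma α hα0 hα1 w hw0 hwα xopt hopt.1 xMM hMM hab
    · have := key_lemma α hα0 hα1 w hw0 hwα xopt hopt.1 (xMM.2, xMM.1)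
        (Maximin_swap hMM) hab
      have hz : zv w (xMM.2, xMM.1) = zv w xMM := by
        simp [zv, add_comm]
      linarith [this, hz.le, hz.ge]
  nlinarith [hkey]
end

section
/- For every α with 2/3 ≤ α < 1 and every δ > 0, there exists an instance of the FSSP with two agents and a shared item set in which every item weight is at most α, with a system optimum of value z* > 0 and a maximin fair solution x_MM such that z* − z(x_MM) ≥ (2α − 1 − δ) · z*. Hence the bound 2α − 1 on the Price of Fairness for maximin fair solutions in the shared items case is tight for 2/3 < α ≤ 1. -/
/-- Expand a sum over a subset of `Fin 4`. -/
lemma sumw_fin4 (w : Fin 4 → ℝ) (T : Finset (Fin 4)) :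
    sumw w T = (if (0 : Fin 4) ∈ T then w 0 else 0) + (if (1 : Fin 4) ∈ T then w 1 else 0)
      + (if (2 : Fin 4) ∈ T then w 2 else 0) + (if (3 : Fin 4) ∈ T then w 3 else 0) := by
  unfold sumw
  have h : ∑ i ∈ T, w i = ∑ i ∈ Finset.univ, if i ∈ T then w i else 0 := by
    rw [Finset.sum_ite_mem, Finset.univ_inter]
  rw [h, Fin.sum_univ_four]

set_option maxHeartbeats 2000000 in
/-- For every `2/3 ≤ α < 1` and `δ > 0` there is an FSSP instance with a shared
item set, weights at most `α`, a system optimum with positive value and a maximin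
fair solution whose loss is at least `(2α - 1 - δ) · z*`: the bound `2α - 1` is
tight for `2/3 < α ≤ 1` in the shared items case. -/
theorem pof_shared_maximin_lower_bound (α : ℝ) (hα0 : 2/3 ≤ α) (hα1 : α < 1)
    (δ : ℝ) (hδ : 0 < δ) :
    ∃ (n : ℕ) (w : Fin n → ℝ),
      ValidInst w α ∧
      ∃ xopt : Finset (Fin n) × Finset (Fin n), SysOpt w xopt ∧ 0 < zv w xopt ∧
        ∃ xMM : Finset (Fin n) × Finset (Fin n), Maximin w xMM ∧
          (2 * α - 1 - δ) * zv w xopt ≤ zv w xopt - zv w xMM := by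
  set e : ℝ := min (δ/8) (min ((1-α)/3) (1/9)) with he_def
  have he0 : 0 < e := by
    apply lt_min (by linarith)
    exact lt_min (by linarith) (by norm_num)
  have heδ : e ≤ δ/8 := min_le_left _ _
  have heα : e ≤ (1-α)/3 := le_trans (min_le_right _ _) (min_le_left _ _)
  have he9 : e ≤ 1/9 := le_trans (min_le_right _ _) (min_le_right _ _)
  refine ⟨4, ![α, 1-α+e, 2*e, 1-α-e], ?_⟩
  set w : Fin 4 → ℝ := ![α, 1-α+e, 2*e, 1-α-e] with hw_def
  have hw0 : w 0 = α := rfl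
  have hw1 : w 1 = 1-α+e := rfl
  have hw2 : w 2 = 2*e := rfl
  have hw3 : w 3 = 1-α-e := rfl
  -- the key case analysis over all feasible solutions
  have key : ∀ A B : Finset (Fin 4), Disjoint A B → sumw w A + sumw w B ≤ 1 →
      (sumw w A + sumw w B ≤ 1 - e) ∧
      (1-α+e < sumw w A → sumw w B ≤ 1-α+e) ∧
      (1-α+e ≤ sumw w A → 1-α+e ≤ sumw w B → sumw w A + sumw w B ≤ 2*(1-α+e)) := by
    intro A B hd hf
    have tri : ∀ i : Fin 4, (i ∈ A ∧ i ∉ B) ∨ (i ∉ A ∧ i ∈ B) ∨ (i ∉ A ∧ i ∉ B) := by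
      intro i
      by_cases h1 : i ∈ A
      · exact Or.inl ⟨h1, Finset.disjoint_left.mp hd h1⟩
      · by_cases h2 : i ∈ B
        · exact Or.inr (Or.inl ⟨h1, h2⟩)
        · exact Or.inr (Or.inr ⟨h1, h2⟩)
    rw [sumw_fin4 w A, sumw_fin4 w B] at hf ⊢
    rw [hw0, hw1, hw2, hw3] at hf ⊢
    rcases tri 0 with ⟨h1, h2⟩ | ⟨h1, h2⟩ | ⟨h1, h2⟩ <;>
      rcases tri 1 with ⟨h3, h4⟩ | ⟨h3, h4⟩ | ⟨h3, h4⟩ <;>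
      rcases tri 2 with ⟨h5, h6⟩ | ⟨h5, h6⟩ | ⟨h5, h6⟩ <;>
      rcases tri 3 with ⟨h7, h8⟩ | ⟨h7, h8⟩ | ⟨h7, h8⟩ <;>
      simp only [h1, h2, h3, h4, h5, h6, h7, h8, if_true, if_false, ite_true, ite_false,
        not_true, not_false_iff] at hf ⊢ <;>
      exact ⟨by linarith, fun h => by linarith, fun h h' => by linarith⟩
  -- values of the special solutions
  have hsum03 : sumw w ({0, 3} : Finset (Fin 4)) = 1 - e := by
    rw [sumw, Finset.sum_insert (by decide), Finset.sum_singleton, hw0, hw3]; ring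
  have hsum1 : sumw w ({1} : Finset (Fin 4)) = 1-α+e := by
    rw [sumw, Finset.sum_singleton, hw1]
  have hsum23 : sumw w ({2, 3} : Finset (Fin 4)) = 1-α+e := by
    rw [sumw, Finset.sum_insert (by decide), Finset.sum_singleton, hw2, hw3]; ring
  have hsum_empty : sumw w (∅ : Finset (Fin 4)) = 0 := Finset.sum_empty
  refine ⟨⟨?_, ?_, ?_⟩, (({0, 3}, ∅) : Finset (Fin 4) × Finset (Fin 4)), ?_, ?_, ?_⟩
  · -- nonneg
    intro i
    fin_cases i <;> simp <;> linarith
  · -- ≤ α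
    intro i
    fin_cases i <;> simp <;> linarith
  · -- total > 1
    rw [Fin.sum_univ_four, hw0, hw1, hw2, hw3]
    linarith
  · -- SysOpt
    constructor
    · exact ⟨Finset.disjoint_empty_right _, by rw [hsum03, hsum_empty]; linarith⟩
    · rintro ⟨A, B⟩ ⟨hd, hf⟩
      have := (key A B hd hf).1
      simp only [zv, hsum03, hsum_empty]
      linarith
  · -- positive value
    simp only [zv, hsum03, hsum_empty]
    linarith
  · -- maximin solution
    refine ⟨(({1}, {2, 3}) : Finset (Fin 4) × Finset (Fin 4)), ⟨⟨?_, ?_⟩, ?_⟩, ?_⟩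
    · -- feasible
      refine ⟨by decide, ?_⟩
      rw [hsum1, hsum23]
      linarith
    · -- Pareto
      rintro ⟨⟨A, B⟩, ⟨hd, hf⟩, hA, hB, hstrict⟩
      simp only [hsum1, hsum23] at hA hB hstrict
      have h3 := (key A B hd hf).2.2 hA hB
      rcases hstrict with h | h <;> linarith
    · -- maximin optimality
      rintro ⟨A, B⟩ ⟨hd, hf⟩
      simp only [hsum1, hsum23, min_self]
      rcases le_or_gt (sumw w A) (1-α+e) with h | h
      · exact le_trans (min_le_left _ _) h
      · exact le_trans (min_le_right _ _) ((key A B hd hf).2.1 h)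
    · -- the loss bound
      simp only [zv, hsum03, hsum_empty, hsum1, hsum23]
      have h1 : δ * (8/9) ≤ δ * (1 - e) := by nlinarith
      have h2 : 3 * e ≤ δ * (8/9) := by linarith
      have h3 : 0 ≤ (2*α - 1) * e := mul_nonneg (by linarith) he0.le
      nlinarith
end

section
/- For every integer h ≥ 1 and every δ > 0, there exists an instance of the FSSP with two agents and a shared item set in which every item weight is at most 1/(2h+1), with a system optimum of value z* > 0 and a maximin fair solution x_MM such that z* − z(x_MM) ≥ (1/(2h+1) − δ) · z*. Consequently, for every α ∈ (0, 1] the Price of Fairness for maximin fair solutions in the shared items case is at least 1/(2⌈1/(2α)⌉ + 1), and the bound 1/3 is tight for 1/3 < α ≤ 2/3. -/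

lemma card_filter_ico (n a b : ℕ) (hb : b ≤ n) :
    (Finset.univ.filter fun i : Fin n => a ≤ i.val ∧ i.val < b).card = b - a := by
  have himg : (Finset.univ.filter fun i : Fin n => a ≤ i.val ∧ i.val < b).image Fin.val
      = Finset.Ico a b := by
    ext m
    simp only [Finset.mem_image, Finset.mem_filter, Finset.mem_univ, true_and, Finset.mem_Ico]
    constructor
    · rintro ⟨i, ⟨h1, h2⟩, rfl⟩; exact ⟨h1, h2⟩
    · rintro ⟨h1, h2⟩; exact ⟨⟨m, lt_of_lt_of_le h2 hb⟩, ⟨h1, h2⟩, rfl⟩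
  rw [← Finset.card_image_of_injective _ Fin.val_injective, himg, Nat.card_Ico]

noncomputable def Wfun (h : ℕ) (q t : ℝ) : Fin (4*h+1) → ℝ :=
  fun i => if i.val < 2*h+1 then q else t

lemma sumW (h : ℕ) (q t : ℝ) (S : Finset (Fin (4*h+1))) :
    sumw (Wfun h q t) S =
      q * (S.filter fun i => i.val < 2*h+1).card
      + t * (S.filter fun i => ¬ i.val < 2*h+1).card := by
  rw [sumw, ← Finset.sum_filter_add_sum_filter_not S (fun i => i.val < 2*h+1)]
  congr 1
  · rw [Finset.sum_eq_card_nsmul (b := q) ?_, nsmul_eq_mul, mul_comm]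
    intro i hi
    simp only [Finset.mem_filter] at hi
    simp [Wfun, hi.2]
  · rw [Finset.sum_eq_card_nsmul (b := t) ?_, nsmul_eq_mul, mul_comm]
    intro i hi
    simp only [Finset.mem_filter] at hi
    simp [Wfun, hi.2]

lemma card_big (h : ℕ) :
    (Finset.univ.filter fun i : Fin (4*h+1) => i.val < 2*h+1).card = 2*h+1 := by
  have e : (Finset.univ.filter fun i : Fin (4*h+1) => i.val < 2*h+1)
      = (Finset.univ.filter fun i : Fin (4*h+1) => 0 ≤ i.val ∧ i.val < 2*h+1) := by
    ext i; simp
  rw [e, card_filter_ico (4*h+1) 0 (2*h+1) (by omega)]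
  omega

lemma card_tiny (h : ℕ) :
    (Finset.univ.filter fun i : Fin (4*h+1) => ¬ i.val < 2*h+1).card = 2*h := by
  have h1 := Finset.card_filter_add_card_filter_not
    (s := (Finset.univ : Finset (Fin (4*h+1)))) (fun i => i.val < 2*h+1)
  rw [card_big] at h1
  simp only [Finset.card_univ, Fintype.card_fin] at h1
  omega

set_option maxHeartbeats 1000000 in
lemma claimC (h : ℕ) (hh : 1 ≤ h) (q t : ℝ) (hq1 : q * (2*(h:ℝ)+1) = 1) (hq0 : 0 < q)
    (ht0 : 0 < t) (h2ht : 2*(h:ℝ)*t < q) (S T : Finset (Fin (4*h+1)))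
    (hd : Disjoint S T)
    (hcap : sumw (Wfun h q t) S + sumw (Wfun h q t) T ≤ 1)
    (ha : q*(h:ℝ) + t*(h:ℝ) ≤ sumw (Wfun h q t) S)
    (hb : q*(h:ℝ) + t*(h:ℝ) ≤ sumw (Wfun h q t) T) :
    sumw (Wfun h q t) S = q*(h:ℝ) + t*(h:ℝ) ∧ sumw (Wfun h q t) T = q*(h:ℝ) + t*(h:ℝ) := by
  have hhr : (1:ℝ) ≤ (h:ℝ) := by exact_mod_cast hh
  simp only [sumW] at hcap ha hb ⊢
  set B1 := ((S.filter fun i => i.val < 2*h+1)).card with hB1def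
  set B2 := ((T.filter fun i => i.val < 2*h+1)).card with hB2def
  set I1 := ((S.filter fun i => ¬ i.val < 2*h+1)).card with hI1def
  set I2 := ((T.filter fun i => ¬ i.val < 2*h+1)).card with hI2def
  -- count constraints
  have hBsum : B1 + B2 ≤ 2*h+1 := by
    have hdf : Disjoint (S.filter fun i => i.val < 2*h+1) (T.filter fun i => i.val < 2*h+1) :=
      hd.mono (Finset.filter_subset _ _) (Finset.filter_subset _ _)
    calc B1 + B2 = ((S.filter fun i => i.val < 2*h+1) ∪ (T.filter fun i => i.val < 2*h+1)).card :=
          (Finset.card_union_of_disjoint hdf).symm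
      _ ≤ (Finset.univ.filter fun i : Fin (4*h+1) => i.val < 2*h+1).card :=
          Finset.card_le_card (Finset.union_subset
            (Finset.filter_subset_filter _ (Finset.subset_univ S))
            (Finset.filter_subset_filter _ (Finset.subset_univ T)))
      _ = 2*h+1 := card_big h
  have hIsum : I1 + I2 ≤ 2*h := by
    have hdf : Disjoint (S.filter fun i => ¬ i.val < 2*h+1) (T.filter fun i => ¬ i.val < 2*h+1) :=
      hd.mono (Finset.filter_subset _ _) (Finset.filter_subset _ _)
    calc I1 + I2 = ((S.filter fun i => ¬ i.val < 2*h+1) ∪ (T.filter fun i => ¬ i.val < 2*h+1)).card :=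
          (Finset.card_union_of_disjoint hdf).symm
      _ ≤ (Finset.univ.filter fun i : Fin (4*h+1) => ¬ i.val < 2*h+1).card :=
          Finset.card_le_card (Finset.union_subset
            (Finset.filter_subset_filter _ (Finset.subset_univ S))
            (Finset.filter_subset_filter _ (Finset.subset_univ T)))
      _ = 2*h := card_tiny h
  -- big counts are at least h on each side
  have hB1 : h ≤ B1 := by
    by_contra hc
    push_neg at hc
    have h1 : (B1:ℝ) + 1 ≤ (h:ℝ) := by exact_mod_cast hc
    have h2 : (I1:ℝ) ≤ 2*(h:ℝ) := by
      have : I1 ≤ 2*h := by omega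
      exact_mod_cast this
    nlinarith [mul_le_mul_of_nonneg_left h1 hq0.le, mul_le_mul_of_nonneg_left h2 ht0.le,
      mul_nonneg ht0.le (Nat.cast_nonneg (α := ℝ) h)]
  have hB2 : h ≤ B2 := by
    by_contra hc
    push_neg at hc
    have h1 : (B2:ℝ) + 1 ≤ (h:ℝ) := by exact_mod_cast hc
    have h2 : (I2:ℝ) ≤ 2*(h:ℝ) := by
      have : I2 ≤ 2*h := by omega
      exact_mod_cast this
    nlinarith [mul_le_mul_of_nonneg_left h1 hq0.le, mul_le_mul_of_nonneg_left h2 ht0.le,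
      mul_nonneg ht0.le (Nat.cast_nonneg (α := ℝ) h)]
  have hcases : (B1 = h ∧ B2 = h) ∨ (B1 = h ∧ B2 = h+1) ∨ (B1 = h+1 ∧ B2 = h) := by omega
  rcases hcases with ⟨e1, e2⟩ | ⟨e1, e2⟩ | ⟨e1, e2⟩
  · -- main case
    rw [e1] at ha ⊢
    rw [e2] at hb ⊢
    have hi1 : (h:ℝ) ≤ (I1:ℝ) := le_of_mul_le_mul_left (by linarith) ht0
    have hi2 : (h:ℝ) ≤ (I2:ℝ) := le_of_mul_le_mul_left (by linarith) ht0
    have hi1' : h ≤ I1 := by exact_mod_cast hi1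
    have hi2' : h ≤ I2 := by exact_mod_cast hi2
    have : I1 = h ∧ I2 = h := by omega
    rw [this.1, this.2]
    exact ⟨rfl, rfl⟩
  · exfalso
    rw [e1] at ha hcap
    rw [e2] at hb hcap
    have hi1 : (h:ℝ) ≤ (I1:ℝ) := le_of_mul_le_mul_left (by linarith) ht0
    push_cast at hcap
    nlinarith [mul_nonneg ht0.le (Nat.cast_nonneg (α := ℝ) I2),
      mul_le_mul_of_nonneg_left hi1 ht0.le, mul_le_mul_of_nonneg_left hhr ht0.le]
  · exfalso
    rw [e1] at ha hcap
    rw [e2] at hb hcap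
    have hi2 : (h:ℝ) ≤ (I2:ℝ) := le_of_mul_le_mul_left (by linarith) ht0
    push_cast at hcap
    nlinarith [mul_nonneg ht0.le (Nat.cast_nonneg (α := ℝ) I1),
      mul_le_mul_of_nonneg_left hi2 ht0.le, mul_le_mul_of_nonneg_left hhr ht0.le]


set_option maxHeartbeats 1000000 in
lemma main_construction (h : ℕ) (hh : 1 ≤ h) (δ : ℝ) (hδ : 0 < δ) :
    ∃ (n : ℕ) (w : Fin n → ℝ),
      ValidInst w (1 / (2 * (h : ℝ) + 1)) ∧
      ∃ xopt : Finset (Fin n) × Finset (Fin n), SysOpt w xopt ∧ 0 < zv w xopt ∧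
        ∃ xMM : Finset (Fin n) × Finset (Fin n), Maximin w xMM ∧
          (1 / (2 * (h : ℝ) + 1) - δ) * zv w xopt ≤ zv w xopt - zv w xMM := by
  have hhr : (1:ℝ) ≤ (h:ℝ) := by exact_mod_cast hh
  have hden : (0:ℝ) < 2*(h:ℝ)+1 := by linarith
  have hden' : (2*(h:ℝ)+1) ≠ 0 := ne_of_gt hden
  set q : ℝ := 1 / (2 * (h:ℝ) + 1) with hqdef
  have hq0 : 0 < q := by rw [hqdef]; positivity
  have hq1 : q * (2*(h:ℝ)+1) = 1 := by rw [hqdef]; field_simp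
  set t : ℝ := min δ q / (4*(h:ℝ)) with htdef
  have ht0 : 0 < t := by rw [htdef]; exact div_pos (lt_min hδ hq0) (by linarith)
  have h2ht_eq : 2*(h:ℝ)*t = min δ q / 2 := by
    rw [htdef]
    field_simp [show (h:ℝ) ≠ 0 by linarith]
    ring
  have h2ht_le : 2*(h:ℝ)*t ≤ δ := by
    rw [h2ht_eq]; have := min_le_left δ q; linarith
  have h2ht_lt : 2*(h:ℝ)*t < q := by
    rw [h2ht_eq]; have := min_le_right δ q; linarith
  have ht_le_q : t ≤ q := by
    rw [htdef]
    calc min δ q / (4*(h:ℝ)) ≤ min δ q := div_le_self (le_min hδ.le hq0.le) (by linarith)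
    _ ≤ q := min_le_right _ _
  refine ⟨4*h+1, Wfun h q t, ⟨?_, ?_, ?_⟩, ?_⟩
  · -- nonneg
    intro i
    by_cases hc : i.val < 2*h+1 <;> simp only [Wfun, hc, if_true, if_false] <;> linarith
  · -- ≤ q
    intro i
    by_cases hc : i.val < 2*h+1 <;> simp only [Wfun, hc, if_true, if_false] <;> linarith
  · -- total > 1
    have e : ∑ i, Wfun h q t i = sumw (Wfun h q t) Finset.univ := rfl
    rw [e, sumW, card_big, card_tiny]
    push_cast
    nlinarith [mul_pos ht0 (show (0:ℝ) < (h:ℝ) by linarith)]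
  -- the system optimum: all big items
  have hBigsum : sumw (Wfun h q t) (Finset.univ.filter fun i : Fin (4*h+1) => i.val < 2*h+1) = 1 := by
    rw [sumW]
    have e1 : ((Finset.univ.filter fun i : Fin (4*h+1) => i.val < 2*h+1).filter
        fun i => i.val < 2*h+1) = Finset.univ.filter fun i : Fin (4*h+1) => i.val < 2*h+1 := by
      ext i; simp only [Finset.mem_filter, Finset.mem_univ, true_and]; tauto
    have e2 : ((Finset.univ.filter fun i : Fin (4*h+1) => i.val < 2*h+1).filter
        fun i => ¬ i.val < 2*h+1) = (∅ : Finset (Fin (4*h+1))) := by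
      ext i
      simp only [Finset.mem_filter, Finset.mem_univ, true_and, Finset.notMem_empty, iff_false]
      tauto
    rw [e1, e2, card_big, Finset.card_empty]
    push_cast
    nlinarith [hq1]
  have hzero : sumw (Wfun h q t) (∅ : Finset (Fin (4*h+1))) = 0 := by
    rw [sumw]; exact Finset.sum_empty
  have hzopt : zv (Wfun h q t)
      ((Finset.univ.filter fun i : Fin (4*h+1) => i.val < 2*h+1), (∅ : Finset (Fin (4*h+1)))) = 1 := by
    show sumw (Wfun h q t) (Finset.univ.filter fun i : Fin (4*h+1) => i.val < 2*h+1)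
      + sumw (Wfun h q t) (∅ : Finset (Fin (4*h+1))) = 1
    rw [hBigsum, hzero]; ring
  have hFopt : Feas (Wfun h q t)
      ((Finset.univ.filter fun i : Fin (4*h+1) => i.val < 2*h+1), (∅ : Finset (Fin (4*h+1)))) := by
    refine ⟨Finset.disjoint_empty_right _, ?_⟩
    show sumw (Wfun h q t) (Finset.univ.filter fun i : Fin (4*h+1) => i.val < 2*h+1)
      + sumw (Wfun h q t) (∅ : Finset (Fin (4*h+1))) ≤ 1
    rw [hBigsum, hzero]; norm_num
  refine ⟨((Finset.univ.filter fun i : Fin (4*h+1) => i.val < 2*h+1), (∅ : Finset (Fin (4*h+1)))),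
    ⟨hFopt, ?_⟩, ?_, ?_⟩
  · intro y hy
    calc zv (Wfun h q t) y = sumw (Wfun h q t) y.1 + sumw (Wfun h q t) y.2 := rfl
    _ ≤ 1 := hy.2
    _ = _ := hzopt.symm
  · rw [hzopt]; norm_num
  -- the maximin fair solution
  set SA := Finset.univ.filter
    (fun i : Fin (4*h+1) => i.val < h ∨ (2*h+1 ≤ i.val ∧ i.val < 3*h+1)) with hSAdef
  set SB := Finset.univ.filter
    (fun i : Fin (4*h+1) => (h ≤ i.val ∧ i.val < 2*h) ∨ 3*h+1 ≤ i.val) with hSBdef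
  have hSA : sumw (Wfun h q t) SA = q*(h:ℝ) + t*(h:ℝ) := by
    rw [hSAdef, sumW]
    have e1 : ((Finset.univ.filter
        (fun i : Fin (4*h+1) => i.val < h ∨ (2*h+1 ≤ i.val ∧ i.val < 3*h+1))).filter
        fun i => i.val < 2*h+1)
        = Finset.univ.filter fun i : Fin (4*h+1) => 0 ≤ i.val ∧ i.val < h := by
      ext i; simp only [Finset.mem_filter, Finset.mem_univ, true_and]; omega
    have e2 : ((Finset.univ.filter
        (fun i : Fin (4*h+1) => i.val < h ∨ (2*h+1 ≤ i.val ∧ i.val < 3*h+1))).filter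
        fun i => ¬ i.val < 2*h+1)
        = Finset.univ.filter fun i : Fin (4*h+1) => 2*h+1 ≤ i.val ∧ i.val < 3*h+1 := by
      ext i; simp only [Finset.mem_filter, Finset.mem_univ, true_and]; omega
    rw [e1, e2, card_filter_ico _ _ _ (by omega), card_filter_ico _ _ _ (by omega),
      show h - 0 = h from rfl, show 3*h+1-(2*h+1) = h from by omega]
  have hSB : sumw (Wfun h q t) SB = q*(h:ℝ) + t*(h:ℝ) := by
    rw [hSBdef, sumW]
    have e1 : ((Finset.univ.filter
        (fun i : Fin (4*h+1) => (h ≤ i.val ∧ i.val < 2*h) ∨ 3*h+1 ≤ i.val)).filter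
        fun i => i.val < 2*h+1)
        = Finset.univ.filter fun i : Fin (4*h+1) => h ≤ i.val ∧ i.val < 2*h := by
      ext i; simp only [Finset.mem_filter, Finset.mem_univ, true_and]; omega
    have e2 : ((Finset.univ.filter
        (fun i : Fin (4*h+1) => (h ≤ i.val ∧ i.val < 2*h) ∨ 3*h+1 ≤ i.val)).filter
        fun i => ¬ i.val < 2*h+1)
        = Finset.univ.filter fun i : Fin (4*h+1) => 3*h+1 ≤ i.val ∧ i.val < 4*h+1 := by
      ext i
      have hi := i.isLt
      simp only [Finset.mem_filter, Finset.mem_univ, true_and]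
      omega
    rw [e1, e2, card_filter_ico _ _ _ (by omega), card_filter_ico _ _ _ (by omega),
      show 2*h - h = h from by omega, show 4*h+1-(3*h+1) = h from by omega]
  have hdisj : Disjoint SA SB := by
    rw [Finset.disjoint_left]
    intro i hi1 hi2
    rw [hSAdef] at hi1
    rw [hSBdef] at hi2
    simp only [Finset.mem_filter, Finset.mem_univ, true_and] at hi1 hi2
    omega
  have hFMM : Feas (Wfun h q t) (SA, SB) := by
    refine ⟨hdisj, ?_⟩
    show sumw (Wfun h q t) SA + sumw (Wfun h q t) SB ≤ 1
    rw [hSA, hSB]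
    nlinarith [hq1, h2ht_lt]
  have hzMM : zv (Wfun h q t) (SA, SB) = (q*(h:ℝ) + t*(h:ℝ)) + (q*(h:ℝ) + t*(h:ℝ)) := by
    show sumw (Wfun h q t) SA + sumw (Wfun h q t) SB = _
    rw [hSA, hSB]
  refine ⟨(SA, SB), ⟨⟨hFMM, ?_⟩, ?_⟩, ?_⟩
  · -- Pareto: no dominating solution
    rintro ⟨y, hyF, hy1, hy2, hy3⟩
    replace hy1 : sumw (Wfun h q t) SA ≤ sumw (Wfun h q t) y.1 := hy1
    replace hy2 : sumw (Wfun h q t) SB ≤ sumw (Wfun h q t) y.2 := hy2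
    replace hy3 : sumw (Wfun h q t) SA < sumw (Wfun h q t) y.1 ∨
      sumw (Wfun h q t) SB < sumw (Wfun h q t) y.2 := hy3
    rw [hSA] at hy1
    rw [hSB] at hy2
    obtain ⟨e1, e2⟩ := claimC h hh q t hq1 hq0 ht0 h2ht_lt y.1 y.2 hyF.1 hyF.2 hy1 hy2
    rcases hy3 with h3 | h3
    · rw [hSA, e1] at h3; exact lt_irrefl _ h3
    · rw [hSB, e2] at h3; exact lt_irrefl _ h3
  · -- maximin
    intro y hy
    have hx1 : sumw (Wfun h q t) (SA, SB).1 = q*(h:ℝ)+t*(h:ℝ) := hSA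
    have hx2 : sumw (Wfun h q t) (SA, SB).2 = q*(h:ℝ)+t*(h:ℝ) := hSB
    rw [hx1, hx2, min_self]
    rcases le_or_gt (sumw (Wfun h q t) y.1) (q*(h:ℝ)+t*(h:ℝ)) with hc | hc
    · exact le_trans (min_le_left _ _) hc
    rcases le_or_gt (sumw (Wfun h q t) y.2) (q*(h:ℝ)+t*(h:ℝ)) with hc2 | hc2
    · exact le_trans (min_le_right _ _) hc2
    obtain ⟨e1, _⟩ := claimC h hh q t hq1 hq0 ht0 h2ht_lt y.1 y.2 hy.1 hy.2 hc.le hc2.le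
    rw [e1] at hc
    linarith
  · -- the loss inequality
    rw [hzopt, hzMM]
    have : q * (2*(h:ℝ)) + q = 1 := by nlinarith [hq1]
    nlinarith [h2ht_le]

/-- For every integer `h ≥ 1` and `δ > 0` there is an FSSP instance with a shared
item set and weights at most `1/(2h+1)`, a system optimum with positive value and
a maximin fair solution whose loss is at least `(1/(2h+1) - δ) · z*`.
Consequently, for every `α ∈ (0,1]` and `δ > 0` there is such an instance with
weights at most `α` and loss at least `(1/(2⌈1/(2α)⌉+1) - δ) · z*`. -/
theorem pof_shared_maximin_lower_bound_small_alpha :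
    (∀ h : ℕ, 1 ≤ h → ∀ δ : ℝ, 0 < δ →
      ∃ (n : ℕ) (w : Fin n → ℝ),
        ValidInst w (1 / (2 * (h : ℝ) + 1)) ∧
        ∃ xopt : Finset (Fin n) × Finset (Fin n), SysOpt w xopt ∧ 0 < zv w xopt ∧
          ∃ xMM : Finset (Fin n) × Finset (Fin n), Maximin w xMM ∧
            (1 / (2 * (h : ℝ) + 1) - δ) * zv w xopt ≤ zv w xopt - zv w xMM) ∧
    (∀ α : ℝ, 0 < α → α ≤ 1 → ∀ δ : ℝ, 0 < δ →
      ∃ (n : ℕ) (w : Fin n → ℝ),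
        ValidInst w α ∧
        ∃ xopt : Finset (Fin n) × Finset (Fin n), SysOpt w xopt ∧ 0 < zv w xopt ∧
          ∃ xMM : Finset (Fin n) × Finset (Fin n), Maximin w xMM ∧
            (1 / (2 * (⌈1/(2*α)⌉₊ : ℝ) + 1) - δ) * zv w xopt ≤ zv w xopt - zv w xMM) := by
  constructor
  · exact main_construction
  · intro α hα0 hα1 δ hδ
    have h1 : 1 ≤ ⌈1/(2*α)⌉₊ := Nat.one_le_ceil_iff.mpr (by positivity)
    obtain ⟨n, w, hV, rest⟩ := main_construction (⌈1/(2*α)⌉₊) h1 δ hδ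
    refine ⟨n, w, ⟨hV.1, fun i => le_trans (hV.2.1 i) ?_, hV.2.2⟩, rest⟩
    -- 1/(2⌈1/(2α)⌉+1) ≤ α
    have hc : 1/(2*α) ≤ ((⌈1/(2*α)⌉₊ : ℕ) : ℝ) := Nat.le_ceil _
    rw [div_le_iff₀ (by positivity)]
    have h2 : 1 ≤ ((⌈1/(2*α)⌉₊ : ℕ) : ℝ) * (2*α) := (div_le_iff₀ (by positivity)).mp hc
    nlinarith
end
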